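/- arXiv:1908.03551 — 2 statements merged into one kernel-verified Lean document; each statement's English description precedes it below -/
import Mathlib

section
/- For every regular expression E over Σ, the trace-closing semantics equals the trace closure of the standard language: ⟦E⟧^I = [⟦E⟧]; in particular, ⟦E⟧^I is trace closed (closed under ∼). -/
open RegularExpression
open scoped Classical

universe u

variable {α : Type u}

/-- Two words are independent if every letter of the first is independent
of every letter of the second. -/
def WIndep (I : α → α → Prop) (u v : List α) : Prop :=
  ∀ a ∈ u, ∀ b ∈ v, I a b

/-- Trace equivalence: the least equivalence relation on words containing
all pairs (x ++ [a,b] ++ y, x ++ [b,a] ++ y) with a I b. -/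
inductive TrEq (I : α → α → Prop) : List α → List α → Prop
  | swap (x y : List α) {a b : α} : I a b → TrEq I (x ++ [a, b] ++ y) (x ++ [b, a] ++ y)
  | refl (u : List α) : TrEq I u u
  | symm {u v : List α} : TrEq I u v → TrEq I v u
  | trans {u v w : List α} : TrEq I u v → TrEq I v w → TrEq I u w

/-- Trace closure of a language. -/
def TrClosure (I : α → α → Prop) (L : Set (List α)) : Set (List α) :=
  {w | ∃ z ∈ L, TrEq I w z}

/-- u ⊲ z ⊳ v with exactly n blocks of u: there are nonempty words u₁,…,uₙ and
words v₀,…,vₙ (with v₁,…,v_{n-1} nonempty) such that u = u₁⋯uₙ, v = v₀⋯vₙ,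
z = v₀u₁v₁⋯uₙvₙ and vⱼ I uᵢ whenever j < i. -/
def ScatN (I : α → α → Prop) (n : ℕ) (u z v : List α) : Prop :=
  ∃ us vs : ℕ → List α,
    (∀ i, 1 ≤ i → i ≤ n → us i ≠ []) ∧
    (∀ j, 1 ≤ j → j ≤ n - 1 → vs j ≠ []) ∧
    u = ((List.range n).map (fun i => us (i + 1))).flatten ∧
    v = ((List.range (n + 1)).map vs).flatten ∧
    z = vs 0 ++ ((List.range n).map (fun i => us (i + 1) ++ vs (i + 1))).flatten ∧
    (∀ i j, 1 ≤ i → i ≤ n → j < i → WIndep I (vs j) (us i))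

/-- u ⊲ z ⊳ v -/
def Scat (I : α → α → Prop) (u z v : List α) : Prop :=
  ∃ n, ScatN I n u z v

/-- u ∼⊲ z ⊳ v -/
def EqScat (I : α → α → Prop) (u z v : List α) : Prop :=
  ∃ u', TrEq I u u' ∧ Scat I u' z v

/-- u ∼⊲ z ⊳∼ v -/
def EqScatEq (I : α → α → Prop) (u z v : List α) : Prop :=
  ∃ u' v', TrEq I u u' ∧ Scat I u' z v' ∧ TrEq I v' v

/-- u ∼⊲_N z ⊳∼ v : as EqScatEq, with the number of blocks bounded by N -/
def EqScatEqLe (I : α → α → Prop) (N : ℕ) (u z v : List α) : Prop :=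
  ∃ u' v', TrEq I u u' ∧ (∃ n ≤ N, ScatN I n u' z v') ∧ TrEq I v' v

/-- Reordering concatenation of words. -/
def rconc (I : α → α → Prop) : List α → List α → Set (List α)
  | [], v => {v}
  | a :: u, [] => {a :: u}
  | a :: u, b :: v =>
      (List.cons a) '' rconc I u (b :: v) ∪
      {z | WIndep I (a :: u) [b] ∧ ∃ w ∈ rconc I (a :: u) v, z = b :: w}
termination_by u v => u.length + v.length

/-- Reordering concatenation lifted to languages. -/
def rconcL (I : α → α → Prop) (L L' : Set (List α)) : Set (List α) :=
  {z | ∃ u ∈ L, ∃ v ∈ L', z ∈ rconc I u v}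

/-- The reorderable part of a language w.r.t. a word. -/
def RPart (I : α → α → Prop) (u : List α) (L : Set (List α)) : Set (List α) :=
  {v ∈ L | WIndep I v u}

/-- The reordering derivative of a language along a word. -/
def RDeriv (I : α → α → Prop) (u : List α) (L : Set (List α)) : Set (List α) :=
  {v | ∃ z ∈ L, EqScat I u z v}

/-- Syntactic reorderable part of a regexp w.r.t. a letter. -/
noncomputable def Rexp (I : α → α → Prop) (a : α) : RegularExpression α → RegularExpression α
  | zero => zero
  | epsilon => epsilon
  | char b => if I a b then char b else zero
  | plus E F => plus (Rexp I a E) (Rexp I a F)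
  | comp E F => comp (Rexp I a E) (Rexp I a F)
  | RegularExpression.star E => star (Rexp I a E)

/-- Brzozowski reordering derivative of a regexp along a letter. -/
noncomputable def Dexp (I : α → α → Prop) (a : α) : RegularExpression α → RegularExpression α
  | zero => zero
  | epsilon => zero
  | char b => if a = b then epsilon else zero
  | plus E F => plus (Dexp I a E) (Dexp I a F)
  | comp E F => plus (comp (Dexp I a E) F) (comp (Rexp I a E) (Dexp I a F))
  | RegularExpression.star E => comp (star (Rexp I a E)) (comp (Dexp I a E) (star E))

/-- Syntactic reorderable part along a word. -/
noncomputable def RexpW (I : α → α → Prop) (u : List α) (E : RegularExpression α) :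
    RegularExpression α :=
  u.foldl (fun E a => Rexp I a E) E

/-- Brzozowski reordering derivative along a word. -/
noncomputable def DexpW (I : α → α → Prop) (u : List α) (E : RegularExpression α) :
    RegularExpression α :=
  u.foldl (fun E a => Dexp I a E) E

/-- Antimirov reordering parts-of-derivatives along a letter. -/
inductive Antim (I : α → α → Prop) : RegularExpression α → α → RegularExpression α → Prop
  | chr (a : α) : Antim I (char a) a epsilon
  | plusL {E F : RegularExpression α} {a E'} : Antim I E a E' → Antim I (plus E F) a E'
  | plusR {E F : RegularExpression α} {a F'} : Antim I F a F' → Antim I (plus E F) a F'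
  | compL {E F : RegularExpression α} {a E'} : Antim I E a E' → Antim I (comp E F) a (comp E' F)
  | compR {E F : RegularExpression α} {a F'} :
      Antim I F a F' → Antim I (comp E F) a (comp (Rexp I a E) F')
  | st {E : RegularExpression α} {a E'} :
      Antim I E a E' → Antim I (star E) a (comp (star (Rexp I a E)) (comp E' (star E)))

/-- Antimirov reordering parts-of-derivatives along a word. -/
inductive AntimW (I : α → α → Prop) : RegularExpression α → List α → RegularExpression α → Prop
  | nil (E : RegularExpression α) : AntimW I E [] E
  | snoc {E : RegularExpression α} {u E' a E''} :
      AntimW I E u E' → Antim I E' a E'' → AntimW I E (u ++ [a]) E''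

/-- The dependence graph of a word: vertices are positions; distinct positions
are adjacent when their letters are not independent. -/
def depGraph (I : α → α → Prop) (w : List α) : SimpleGraph (Fin w.length) where
  Adj i j := i ≠ j ∧ ¬(I (w.get i) (w.get j) ∧ I (w.get j) (w.get i))
  symm := by
    constructor
    intro i j h
    exact ⟨h.1.symm, fun hc => h.2 ⟨hc.2, hc.1⟩⟩
  loopless := by
    constructor
    intro i h
    exact h.1 rfl

/-- A word is connected if its dependence graph is connected. -/
def WordConnected (I : α → α → Prop) (w : List α) : Prop :=
  (depGraph I w).Preconnected

/-- Least fixed point star for the trace-closing semantics. -/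
def starI (I : α → α → Prop) (L : Set (List α)) : Set (List α) :=
  sInf {X | {([] : List α)} ∪ rconcL I L X ⊆ X}

/-- Trace-closing semantics of regular expressions. -/
def langI (I : α → α → Prop) : RegularExpression α → Set (List α)
  | zero => ∅
  | epsilon => {[]}
  | char a => {[a]}
  | plus E F => langI I E ∪ langI I F
  | comp E F => rconcL I (langI I E) (langI I F)
  | RegularExpression.star E => starI I (langI I E)

/-- L has (scattering) rank at most N. -/
def HasRankLe (I : α → α → Prop) (L : Set (List α)) (N : ℕ) : Prop :=
  ∀ u v, u ++ v ∈ TrClosure I L → ∃ z ∈ L, EqScatEqLe I N u z v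

/-- L has uniform (scattering) rank at most N. -/
def HasUniformRankLe (I : α → α → Prop) (L : Set (List α)) (N : ℕ) : Prop :=
  ∀ w ∈ TrClosure I L, ∃ z ∈ L, ∀ u v, w = u ++ v → EqScatEqLe I N u z v

/-- Star-connected regular expressions. -/
inductive StarConnected (I : α → α → Prop) : RegularExpression α → Prop
  | zero : StarConnected I zero
  | epsilon : StarConnected I epsilon
  | chr (a : α) : StarConnected I (char a)
  | plus {E F : RegularExpression α} :
      StarConnected I E → StarConnected I F → StarConnected I (plus E F)
  | comp {E F : RegularExpression α} :
      StarConnected I E → StarConnected I F → StarConnected I (comp E F)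
  | st {E : RegularExpression α} :
      StarConnected I E → (∀ w ∈ E.matches', WordConnected I w) → StarConnected I (star E)

/-- Refined Antimirov reordering parts-of-derivatives along a letter. -/
inductive RAntim (I : α → α → Prop) :
    RegularExpression α → α → RegularExpression α → RegularExpression α → Prop
  | chr (a : α) : RAntim I (char a) a epsilon epsilon
  | plusL {E F : RegularExpression α} {a El Er} :
      RAntim I E a El Er → RAntim I (plus E F) a El Er
  | plusR {E F : RegularExpression α} {a Fl Fr} :
      RAntim I F a Fl Fr → RAntim I (plus E F) a Fl Fr
  | compL {E F : RegularExpression α} {a El Er} :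
      RAntim I E a El Er → RAntim I (comp E F) a El (comp Er F)
  | compR {E F : RegularExpression α} {a Fl Fr} :
      RAntim I F a Fl Fr → RAntim I (comp E F) a (comp (Rexp I a E) Fl) Fr
  | st {E : RegularExpression α} {a El Er} :
      RAntim I E a El Er →
      RAntim I (star E) a (comp (star (Rexp I a E)) El) (comp Er (star E))

/-- Refined Antimirov relation lifted to nonempty lists of regexps (unbounded). -/
inductive RAntimL (I : α → α → Prop) :
    List (RegularExpression α) → α → List (RegularExpression α) → Prop
  | split {Γ Δ : List (RegularExpression α)} {E : RegularExpression α} {a El Er} :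
      RAntim I E a El Er →
      RAntimL I (Γ ++ E :: Δ) a (Γ.map (Rexp I a) ++ El :: Er :: Δ)
  | dropL {Γ Δ : List (RegularExpression α)} {E : RegularExpression α} {a El Er} :
      RAntim I E a El Er → [] ∈ El.matches' → Γ ≠ [] →
      RAntimL I (Γ ++ E :: Δ) a (Γ.map (Rexp I a) ++ Er :: Δ)
  | dropR {Γ Δ : List (RegularExpression α)} {E : RegularExpression α} {a El Er} :
      RAntim I E a El Er → [] ∈ Er.matches' → Δ ≠ [] →
      RAntimL I (Γ ++ E :: Δ) a (Γ.map (Rexp I a) ++ El :: Δ)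
  | dropBoth {Γ Δ : List (RegularExpression α)} {E : RegularExpression α} {a El Er} :
      RAntim I E a El Er → [] ∈ El.matches' → [] ∈ Er.matches' → Γ ≠ [] → Δ ≠ [] →
      RAntimL I (Γ ++ E :: Δ) a (Γ.map (Rexp I a) ++ Δ)

/-- Refined Antimirov relation along a word (unbounded). -/
inductive RAntimW (I : α → α → Prop) :
    RegularExpression α → List α → List (RegularExpression α) → Prop
  | nil (E : RegularExpression α) : RAntimW I E [] [E]
  | snoc {E : RegularExpression α} {u Γ a Γ'} :
      RAntimW I E u Γ → RAntimL I Γ a Γ' → RAntimW I E (u ++ [a]) Γ'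

/-- N-bounded refined Antimirov relation lifted to nonempty lists of regexps. -/
inductive RAntimLN (I : α → α → Prop) (N : ℕ) :
    List (RegularExpression α) → α → List (RegularExpression α) → Prop
  | split {Γ Δ : List (RegularExpression α)} {E : RegularExpression α} {a El Er} :
      RAntim I E a El Er → Γ.length + Δ.length < N →
      RAntimLN I N (Γ ++ E :: Δ) a (Γ.map (Rexp I a) ++ El :: Er :: Δ)
  | dropL {Γ Δ : List (RegularExpression α)} {E : RegularExpression α} {a El Er} :
      RAntim I E a El Er → [] ∈ El.matches' → Γ ≠ [] →
      RAntimLN I N (Γ ++ E :: Δ) a (Γ.map (Rexp I a) ++ Er :: Δ)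
  | dropR {Γ Δ : List (RegularExpression α)} {E : RegularExpression α} {a El Er} :
      RAntim I E a El Er → [] ∈ Er.matches' → Δ ≠ [] →
      RAntimLN I N (Γ ++ E :: Δ) a (Γ.map (Rexp I a) ++ El :: Δ)
  | dropBoth {Γ Δ : List (RegularExpression α)} {E : RegularExpression α} {a El Er} :
      RAntim I E a El Er → [] ∈ El.matches' → [] ∈ Er.matches' → Γ ≠ [] → Δ ≠ [] →
      RAntimLN I N (Γ ++ E :: Δ) a (Γ.map (Rexp I a) ++ Δ)

/-- N-bounded refined Antimirov relation along a word. -/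
inductive RAntimWN (I : α → α → Prop) (N : ℕ) :
    RegularExpression α → List α → List (RegularExpression α) → Prop
  | nil (E : RegularExpression α) : RAntimWN I N E [] [E]
  | snoc {E : RegularExpression α} {u Γ a Γ'} :
      RAntimWN I N E u Γ → RAntimLN I N Γ a Γ' → RAntimWN I N E (u ++ [a]) Γ'

/-!
By structural induction on `E` it suffices that `·^I` and the star fixed point commute with
trace closure: `[A] ·^I [B] = [A B]` and `μX. {ε} ∪ [M] ·^I X = [M∗]`. Every word of
`u ·^I v` is trace equivalent to `u v`, and `u v ∈ u ·^I v`. The remaining inclusions follow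
once `[A] ·^I [B]` is known to be trace closed, and this reduces to a single adjacent swap
`a b ↦ b a` in a word of `u ·^I v`: each of `a`, `b` comes from `u` or from `v`, and in all
four cases the swapped word lies in `u' ·^I v'`, where `u'`, `v'` arise from `u`, `v` by at
most one swap.
-/

open scoped Computability

section TraceClosure

variable {I : α → α → Prop}

theorem TrEq.perm {u v : List α} (h : TrEq I u v) : u.Perm v := by
  induction h with
  | swap x y => simpa using (List.Perm.swap _ _ y).append_left x
  | refl => exact .refl _
  | symm _ ih => exact ih.symm
  | trans _ _ ih₁ ih₂ => exact ih₁.trans ih₂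

theorem TrEq.append_right {u v : List α} (h : TrEq I u v) (w : List α) :
    TrEq I (u ++ w) (v ++ w) := by
  induction h with
  | swap x y hab => simpa using TrEq.swap x (y ++ w) hab
  | refl => exact .refl _
  | symm _ ih => exact ih.symm
  | trans _ _ ih₁ ih₂ => exact ih₁.trans ih₂

theorem TrEq.cons (c : α) {u v : List α} (h : TrEq I u v) : TrEq I (c :: u) (c :: v) := by
  induction h with
  | swap x y hab => exact TrEq.swap (c :: x) y hab
  | refl => exact .refl _
  | symm _ ih => exact ih.symm
  | trans _ _ ih₁ ih₂ => exact ih₁.trans ih₂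

theorem TrEq.append_left (w : List α) {u v : List α} (h : TrEq I u v) :
    TrEq I (w ++ u) (w ++ v) := by
  induction w with
  | nil => exact h
  | cons c w ih => exact ih.cons c

theorem TrEq.append {u u' v v' : List α} (hu : TrEq I u u') (hv : TrEq I v v') :
    TrEq I (u ++ v) (u' ++ v') :=
  (hu.append_right v).trans (hv.append_left u')

theorem TrEq.cons_append_of_forall {c : α} {u : List α} (h : ∀ x ∈ u, I c x) (v : List α) :
    TrEq I (c :: (u ++ v)) (u ++ c :: v) := by
  induction u with
  | nil => exact .refl _
  | cons x u ih =>
    have hx : TrEq I (c :: x :: (u ++ v)) (x :: c :: (u ++ v)) := .swap [] _ (h x (by simp))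
    exact hx.trans ((ih fun y hy => h y (by simp [hy])).cons x)

def IsTraceClosed (I : α → α → Prop) (L : Set (List α)) : Prop :=
  ∀ ⦃w z⦄, TrEq I w z → z ∈ L → w ∈ L

theorem subset_trClosure (L : Set (List α)) : L ⊆ TrClosure I L :=
  fun w hw => ⟨w, hw, .refl w⟩

theorem trClosure_mono {L L' : Set (List α)} (h : L ⊆ L') : TrClosure I L ⊆ TrClosure I L' :=
  fun _ ⟨z, hz, hwz⟩ => ⟨z, h hz, hwz⟩

theorem isTraceClosed_trClosure (L : Set (List α)) : IsTraceClosed I (TrClosure I L) :=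
  fun _ _ hwz ⟨z₀, hz₀, hzz₀⟩ => ⟨z₀, hz₀, hwz.trans hzz₀⟩

theorem trClosure_subset {L S : Set (List α)} (hLS : L ⊆ S) (hS : IsTraceClosed I S) :
    TrClosure I L ⊆ S :=
  fun _ ⟨_, hz, hwz⟩ => hS hwz (hLS hz)

theorem trClosure_union (L L' : Set (List α)) :
    TrClosure I (L ∪ L') = TrClosure I L ∪ TrClosure I L' := by
  ext w
  simp only [TrClosure, Set.mem_union, Set.mem_setOf_eq]
  constructor
  · rintro ⟨z, hz | hz, hwz⟩
    exacts [.inl ⟨z, hz, hwz⟩, .inr ⟨z, hz, hwz⟩]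
  · rintro (⟨z, hz, hwz⟩ | ⟨z, hz, hwz⟩)
    exacts [⟨z, .inl hz, hwz⟩, ⟨z, .inr hz, hwz⟩]

theorem trClosure_singleton_of_length_le_one {u : List α} (hu : u.length ≤ 1) :
    TrClosure I {u} = {u} := by
  ext w
  simp only [TrClosure, Set.mem_singleton_iff, exists_eq_left, Set.mem_setOf_eq]
  refine ⟨fun h => ?_, fun h => h ▸ .refl w⟩
  match u, hu with
  | [], _ => exact h.perm.eq_nil
  | [a], _ => exact List.perm_singleton.mp h.perm

theorem isTraceClosed_of_swap [Std.Symm I] {L : Set (List α)}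
    (hL : ∀ x y {a b}, I a b → x ++ a :: b :: y ∈ L → x ++ b :: a :: y ∈ L) :
    IsTraceClosed I L := by
  suffices h : ∀ {w z}, TrEq I w z → (w ∈ L ↔ z ∈ L) from fun _ _ hwz hz => (h hwz).2 hz
  intro w z hwz
  induction hwz with
  | swap x y hab => simpa using ⟨hL x y hab, hL x y (Std.Symm.symm _ _ hab)⟩
  | refl => exact .rfl
  | symm _ ih => exact ih.symm
  | trans _ _ ih₁ ih₂ => exact ih₁.trans ih₂

end TraceClosure

section ReorderingConcatenation

variable {I : α → α → Prop}

theorem rconc_nil_right (u : List α) : rconc I u [] = {u} := by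
  cases u <;> simp [rconc]

theorem nil_mem_rconc_iff {u v : List α} : [] ∈ rconc I u v ↔ u = [] ∧ v = [] := by
  match u, v with
  | [], v => simp [rconc, eq_comm]
  | _ :: _, [] => simp [rconc_nil_right]
  | _ :: _, _ :: _ => simp [rconc]

theorem cons_mem_rconc_iff {c : α} {z u v : List α} :
    c :: z ∈ rconc I u v ↔
      (∃ u', u = c :: u' ∧ z ∈ rconc I u' v) ∨
      (∃ v', v = c :: v' ∧ (∀ x ∈ u, I x c) ∧ z ∈ rconc I u v') := by
  match u, v with
  | [], v => simp [rconc, eq_comm]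
  | _ :: _, [] => simp [rconc_nil_right, eq_comm]
  | a :: u, b :: v =>
    rw [rconc]
    simp only [WIndep, List.mem_singleton]
    aesop

theorem append_mem_rconc (u v : List α) : u ++ v ∈ rconc I u v := by
  induction u with
  | nil => simp [rconc]
  | cons c u ih => exact cons_mem_rconc_iff.mpr (.inl ⟨u, rfl, ih⟩)

theorem trEq_append_of_mem_rconc [Std.Symm I] {z u v : List α} (h : z ∈ rconc I u v) :
    TrEq I z (u ++ v) := by
  induction z generalizing u v with
  | nil =>
    obtain ⟨rfl, rfl⟩ := nil_mem_rconc_iff.mp h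
    exact .refl []
  | cons c z ih =>
    obtain ⟨u, rfl, hz⟩ | ⟨v, rfl, hcu, hz⟩ := cons_mem_rconc_iff.mp h
    · exact (ih hz).cons c
    · exact ((ih hz).cons c).trans
        (.cons_append_of_forall (fun x hx => Std.Symm.symm _ _ (hcu x hx)) v)

theorem rconc_swap {a b : α} (hab : I a b) (x : List α) {y u v : List α}
    (h : x ++ a :: b :: y ∈ rconc I u v) :
    ∃ u' v', TrEq I u' u ∧ TrEq I v' v ∧ x ++ b :: a :: y ∈ rconc I u' v' := by
  induction x generalizing u v with
  | nil =>
    simp only [List.nil_append, cons_mem_rconc_iff] at h ⊢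
    rcases h with ⟨u, rfl, ⟨u, rfl, hy⟩ | ⟨v, rfl, hbu, hy⟩⟩ |
      ⟨v, rfl, hau, ⟨u, rfl, hy⟩ | ⟨v, rfl, hbu, hy⟩⟩
    · exact ⟨b :: a :: u, v, (TrEq.swap [] u hab).symm, .refl v,
        .inl ⟨_, rfl, .inl ⟨u, rfl, hy⟩⟩⟩
    · refine ⟨a :: u, b :: v, .refl _, .refl _, .inr ⟨v, rfl, ?_, .inl ⟨u, rfl, hy⟩⟩⟩
      simpa [hab] using hbu
    · exact ⟨b :: u, a :: v, .refl _, .refl _,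
        .inl ⟨u, rfl, .inr ⟨v, rfl, fun x hx => hau x (by simp [hx]), hy⟩⟩⟩
    · exact ⟨u, b :: a :: v, .refl u, (TrEq.swap [] v hab).symm,
        .inr ⟨_, rfl, hbu, .inr ⟨v, rfl, hau, hy⟩⟩⟩
  | cons c x ih =>
    rw [List.cons_append, cons_mem_rconc_iff] at h
    obtain ⟨u, rfl, hz⟩ | ⟨v, rfl, hcu, hz⟩ := h
    · obtain ⟨u', v', hu, hv, hz'⟩ := ih hz
      exact ⟨c :: u', v', hu.cons c, hv, cons_mem_rconc_iff.mpr (.inl ⟨u', rfl, hz'⟩)⟩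
    · obtain ⟨u', v', hu, hv, hz'⟩ := ih hz
      refine ⟨u', c :: v', hu, hv.cons c, cons_mem_rconc_iff.mpr (.inr ⟨v', rfl, ?_, hz'⟩)⟩
      exact fun x' hx' => hcu x' (hu.perm.subset hx')

end ReorderingConcatenation

section Languages

variable {I : α → α → Prop}

theorem rconcL_mono {A A' B B' : Set (List α)} (hA : A ⊆ A') (hB : B ⊆ B') :
    rconcL I A B ⊆ rconcL I A' B' :=
  fun _ ⟨u, hu, v, hv, hz⟩ => ⟨u, hA hu, v, hB hv, hz⟩

theorem append_mem_rconcL {A B : Set (List α)} {u v : List α} (hu : u ∈ A) (hv : v ∈ B) :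
    u ++ v ∈ rconcL I A B :=
  ⟨u, hu, v, hv, append_mem_rconc u v⟩

theorem IsTraceClosed.rconcL [Std.Symm I] {A B : Set (List α)} (hA : IsTraceClosed I A)
    (hB : IsTraceClosed I B) : IsTraceClosed I (rconcL I A B) := by
  refine isTraceClosed_of_swap fun x y a b hab ⟨u, hu, v, hv, hz⟩ => ?_
  obtain ⟨u', v', hu', hv', hz'⟩ := rconc_swap hab x hz
  exact ⟨u', hA hu' hu, v', hB hv' hv, hz'⟩

theorem rconcL_trClosure [Std.Symm I] (A B : Language α) :
    rconcL I (TrClosure I A) (TrClosure I B) = TrClosure I (A * B) := by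
  refine Set.Subset.antisymm ?_ ?_
  · rintro z ⟨u, ⟨u₀, hu₀, hu⟩, v, ⟨v₀, hv₀, hv⟩, hz⟩
    exact ⟨u₀ ++ v₀, Language.append_mem_mul hu₀ hv₀,
      (trEq_append_of_mem_rconc hz).trans (hu.append hv)⟩
  · refine trClosure_subset ?_ ((isTraceClosed_trClosure _).rconcL (isTraceClosed_trClosure _))
    rintro _ ⟨u, hu, v, hv, rfl⟩
    exact append_mem_rconcL (subset_trClosure _ hu) (subset_trClosure _ hv)

theorem starI_subset {L X : Set (List α)} (h : {[]} ∪ rconcL I L X ⊆ X) : starI I L ⊆ X :=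
  sInf_le h

theorem nil_mem_starI (L : Set (List α)) : [] ∈ starI I L :=
  Set.mem_sInter.mpr fun _ hX => hX (.inl rfl)

theorem rconcL_starI_subset (L : Set (List α)) : rconcL I L (starI I L) ⊆ starI I L :=
  fun _ hz => Set.mem_sInter.mpr fun _ hX =>
    hX (.inr (rconcL_mono subset_rfl (starI_subset hX) hz))

theorem mem_starI_of_trEq_flatten [Std.Symm I] {L : Set (List α)} (hL : IsTraceClosed I L)
    {Ls : List (List α)} (hLs : ∀ y ∈ Ls, y ∈ L) {w : List α} (hw : TrEq I w Ls.flatten) :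
    w ∈ starI I L := by
  induction Ls generalizing w with
  | nil => exact hw.perm.eq_nil ▸ nil_mem_starI L
  | cons m Ls ih =>
    have hmem : w ∈ rconcL I L (TrClosure I {Ls.flatten}) :=
      hL.rconcL (isTraceClosed_trClosure _) hw
        (append_mem_rconcL (hLs m (by simp)) (subset_trClosure _ rfl))
    refine rconcL_starI_subset L (rconcL_mono subset_rfl ?_ hmem)
    rintro v ⟨_, rfl, hv⟩
    exact ih (fun y hy => hLs y (by simp [hy])) hv

theorem starI_trClosure [Std.Symm I] (M : Language α) :
    starI I (TrClosure I M) = TrClosure I (M∗ : Language α) := by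
  refine Set.Subset.antisymm (starI_subset ?_) ?_
  · rintro z (rfl | hz)
    · exact subset_trClosure _ (Language.nil_mem_kstar M)
    · rw [rconcL_trClosure] at hz
      exact trClosure_mono (mul_kstar_le_kstar : M * M∗ ≤ M∗) hz
  · rintro w ⟨_, hz, hw⟩
    obtain ⟨Ls, rfl, hLs⟩ := Language.mem_kstar.mp hz
    exact mem_starI_of_trEq_flatten (isTraceClosed_trClosure _)
      (fun y hy => subset_trClosure _ (hLs y hy)) hw

theorem langI_eq_trClosure [Std.Symm I] (E : RegularExpression α) :
    langI I E = TrClosure I E.matches' := by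
  induction E with
  | zero =>
    refine (Set.eq_empty_of_forall_notMem ?_).symm
    rintro _ ⟨z, hz, -⟩
    exact Language.notMem_zero z hz
  | epsilon => exact (trClosure_singleton_of_length_le_one (by simp)).symm
  | char a => exact (trClosure_singleton_of_length_le_one (by simp)).symm
  | plus E F ihE ihF =>
    rw [langI, ihE, ihF, matches', Language.add_def]
    exact (trClosure_union _ _).symm
  | comp E F ihE ihF => rw [langI, ihE, ihF, rconcL_trClosure, matches']
  | star E ih => rw [langI, ih, starI_trClosure, matches']

end Languages

theorem stmt3_general {α : Type u} (I : α → α → Prop)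
    (hsym : Symmetric I) (E : RegularExpression α) :
    langI I E = TrClosure I E.matches' ∧
      ∀ w ∈ langI I E, ∀ z, TrEq I z w → z ∈ langI I E := by
  have : Std.Symm I := ⟨fun _ _ h => hsym h⟩
  rw [langI_eq_trClosure E]
  exact ⟨rfl, fun _ hw _ hz => isTraceClosed_trClosure _ hz hw⟩

/-- ⟦E⟧^I = [⟦E⟧]; in particular ⟦E⟧^I is trace closed. -/
theorem stmt3 {α : Type u} [Fintype α] (I : α → α → Prop)
    (hirr : Irreflexive I) (hsym : Symmetric I) (E : RegularExpression α) :
    langI I E = TrClosure I E.matches' ∧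
      ∀ w ∈ langI I E, ∀ z, TrEq I z w → z ∈ langI I E :=
  stmt3_general I hsym E
end

section
/- For every language L over Σ and every word u: (1) D_u [L] = [D^I_u L], where D_u L = {v | u++v ∈ L} is the ordinary left quotient; (2) for all words v, u++v ∈ [L] if and only if v ∈ [D^I_u L]; and (3) u ∈ [L] if and only if ε ∈ D^I_u L. -/
open RegularExpression
open scoped Classical

universe u

variable {α : Type u}

/-! `u ++ v ∼ z` holds exactly when `z` interleaves some `u' ∼ u` and `v' ∼ v` so that every
letter of `v'` is independent of the letters of `u'` after it; grouping maximal runs into blocks,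
this is `u' ⊲ z ⊳ v'`. For the hard direction the first letter `a` of `u` is tracked along a
chain of swaps: the letters in front of it stay independent of `a`, so `a` can be moved back to
the front. Part (3) is the case `v = ε`, since `ε` is trace equivalent only to itself. -/

theorem List.flatten_map_range_succ {β : Type*} (f : ℕ → List β) (n : ℕ) :
    ((List.range (n + 1)).map f).flatten
      = f 0 ++ ((List.range n).map fun i => f (i + 1)).flatten := by
  simp [List.range_succ_eq_map, Function.comp_def]

section

variable {I : α → α → Prop}

namespace TrEq

theorem append_left_s6 {u v : List α} (w : List α) (h : TrEq I u v) :
    TrEq I (w ++ u) (w ++ v) := by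
  induction h with
  | swap x y hI => simpa [List.append_assoc] using TrEq.swap (w ++ x) y hI
  | refl => exact .refl _
  | symm _ ih => exact ih.symm
  | trans _ _ ih₁ ih₂ => exact ih₁.trans ih₂

theorem append_right_s6 {u v : List α} (w : List α) (h : TrEq I u v) :
    TrEq I (u ++ w) (v ++ w) := by
  induction h with
  | swap x y hI => simpa [List.append_assoc] using TrEq.swap (I := I) x (y ++ w) hI
  | refl => exact .refl _
  | symm _ ih => exact ih.symm
  | trans _ _ ih₁ ih₂ => exact ih₁.trans ih₂

theorem append_s6 {u u' v v' : List α} (hu : TrEq I u u') (hv : TrEq I v v') :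
    TrEq I (u ++ v) (u' ++ v') :=
  (hu.append_right_s6 v).trans (hv.append_left_s6 u')

theorem length_eq {u v : List α} (h : TrEq I u v) : u.length = v.length := by
  induction h with
  | swap => simp
  | refl => rfl
  | symm _ ih => exact ih.symm
  | trans _ _ ih₁ ih₂ => exact ih₁.trans ih₂

theorem eq_nil_of_nil {z : List α} (h : TrEq I [] z) : z = [] :=
  List.eq_nil_of_length_eq_zero h.length_eq.symm

theorem append_cons_of_forall [Std.Symm I] {b : α} {x w : List α}
    (hx : ∀ c ∈ x, I b c) : TrEq I (x ++ b :: w) (b :: (x ++ w)) := by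
  induction x with
  | nil => exact .refl _
  | cons c x ih =>
    have hcomm : TrEq I (c :: b :: (x ++ w)) (b :: c :: (x ++ w)) := by
      simpa using TrEq.swap (I := I) [] (x ++ w) (symm_of I (hx c List.mem_cons_self))
    exact ((ih fun d hd => hx d (List.mem_cons_of_mem c hd)).append_left_s6 [c]).trans hcomm

end TrEq

variable (I) in
def SwapStep (x y : List α) : Prop :=
  ∃ (p q : List α) (a b : α), I a b ∧ x = p ++ a :: b :: q ∧ y = p ++ b :: a :: q

theorem SwapStep.symm [Std.Symm I] {x y : List α} (h : SwapStep I x y) :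
    SwapStep I y x := by
  obtain ⟨p, q, a, b, hI, rfl, rfl⟩ := h
  exact ⟨p, q, b, a, symm_of I hI, rfl, rfl⟩

theorem TrEq.reflTransGen_swapStep [Std.Symm I] {x y : List α} (h : TrEq I x y) :
    Relation.ReflTransGen (SwapStep I) x y := by
  have : Std.Symm (SwapStep I) := ⟨fun _ _ => SwapStep.symm⟩
  induction h with
  | swap x y hI => exact .single ⟨x, y, _, _, hI, by simp, by simp⟩
  | refl => exact .refl
  | symm _ ih => exact Std.Symm.symm _ _ ih
  | trans _ _ ih₁ ih₂ => exact ih₁.trans ih₂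

theorem append_cons_eq_append_cons_cons {x y p q : List α} {a b c : α}
    (h : x ++ a :: y = p ++ b :: c :: q) :
    (∃ t, p = x ++ a :: t ∧ y = t ++ b :: c :: q) ∨
    (p = x ∧ b = a ∧ y = c :: q) ∨
    (p ++ [b] = x ∧ c = a ∧ y = q) ∨
    (∃ t, p ++ b :: c :: t = x ∧ q = t ++ a :: y) := by
  rcases List.append_eq_append_iff.mp h with ⟨t, hp, ht⟩ | ⟨t, hx, ht⟩
  · rcases t with _ | ⟨d, t⟩
    · simp only [List.nil_append, List.cons.injEq] at ht
      exact Or.inr (Or.inl ⟨by simpa using hp, ht.1.symm, ht.2⟩)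
    · simp only [List.cons_append, List.cons.injEq] at ht
      obtain ⟨rfl, rfl⟩ := ht
      exact Or.inl ⟨t, hp, rfl⟩
  · rcases t with _ | ⟨e, _ | ⟨f, t⟩⟩
    · simp only [List.nil_append, List.cons.injEq] at ht
      exact Or.inr (Or.inl ⟨by simpa using hx.symm, ht.1, ht.2.symm⟩)
    · simp only [List.cons_append, List.nil_append, List.cons.injEq] at ht
      obtain ⟨rfl, rfl, rfl⟩ := ht
      exact Or.inr (Or.inr (Or.inl ⟨hx.symm, rfl, rfl⟩))
    · simp only [List.cons_append, List.cons.injEq] at ht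
      obtain ⟨rfl, rfl, rfl⟩ := ht
      exact Or.inr (Or.inr (Or.inr ⟨t, hx.symm, rfl⟩))

theorem SwapStep.exists_of_append_cons [Std.Symm I] {x y z : List α} {a : α}
    (h : SwapStep I (x ++ a :: y) z) (hx : ∀ c ∈ x, I c a) :
    ∃ x' y', z = x' ++ a :: y' ∧ (∀ c ∈ x', I c a) ∧ TrEq I (x ++ y) (x' ++ y') := by
  obtain ⟨p, q, b, c, hI, heq, rfl⟩ := h
  rcases append_cons_eq_append_cons_cons heq with
    ⟨t, rfl, rfl⟩ | ⟨rfl, rfl, rfl⟩ | ⟨rfl, rfl, rfl⟩ | ⟨t, rfl, rfl⟩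
  · refine ⟨x, t ++ c :: b :: q, by simp, hx, ?_⟩
    simpa using TrEq.swap (I := I) (x ++ t) q hI
  · refine ⟨p ++ [c], q, by simp, ?_, by simpa using TrEq.refl (I := I) (p ++ c :: q)⟩
    intro d hd
    rcases List.mem_append.mp hd with hd | hd
    · exact hx d hd
    · rw [List.mem_singleton.mp hd]; exact symm_of I hI
  · exact ⟨p, b :: y, by simp, fun d hd => hx d (by simp [hd]), by simpa using .refl _⟩
  · refine ⟨p ++ c :: b :: t, y, by simp, ?_, by simpa using TrEq.swap (I := I) p (t ++ y) hI⟩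
    intro d hd
    apply hx d
    simp only [List.mem_append, List.mem_cons] at hd ⊢
    tauto

theorem TrEq.exists_of_cons [Std.Symm I] {a : α} {w z : List α} (h : TrEq I (a :: w) z) :
    ∃ x y, z = x ++ a :: y ∧ (∀ c ∈ x, I c a) ∧ TrEq I w (x ++ y) := by
  suffices ∀ m, Relation.ReflTransGen (SwapStep I) m z → ∀ x y, m = x ++ a :: y →
      (∀ c ∈ x, I c a) →
      ∃ x' y', z = x' ++ a :: y' ∧ (∀ c ∈ x', I c a) ∧ TrEq I (x ++ y) (x' ++ y') from
    this _ h.reflTransGen_swapStep [] w rfl (by simp)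
  clear h
  intro m hm
  induction hm with
  | refl => exact fun x y hm hx => ⟨x, y, hm, hx, .refl _⟩
  | tail _ hstep ih =>
    intro x y hm hx
    obtain ⟨x₁, y₁, rfl, hx₁, h₁⟩ := ih x y hm hx
    obtain ⟨x₂, y₂, rfl, hx₂, h₂⟩ := hstep.exists_of_append_cons hx₁
    exact ⟨x₂, y₂, rfl, hx₂, h₁.trans h₂⟩

variable (I) in
/-- The letter-by-letter form of `Scat`: the blocks of `u` and `v` are forgotten. -/
inductive IndepShuffle : List α → List α → List α → Prop
  | nil : IndepShuffle [] [] []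
  | consLeft (a : α) {u z v : List α} : IndepShuffle u z v → IndepShuffle (a :: u) (a :: z) v
  | consRight (b : α) {u z v : List α} :
      (∀ c ∈ u, I b c) → IndepShuffle u z v → IndepShuffle u (b :: z) (b :: v)

namespace IndepShuffle

theorem nil_left (z : List α) : IndepShuffle I [] z z := by
  induction z with
  | nil => exact .nil
  | cons b z ih => exact .consRight b (by simp) ih

theorem append_left_s6 {u z v : List α} (u₀ : List α) (h : IndepShuffle I u z v) :
    IndepShuffle I (u₀ ++ u) (u₀ ++ z) v := by
  induction u₀ with
  | nil => exact h
  | cons a u₀ ih => exact .consLeft a ih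

theorem append_right_s6 {u z v : List α} {v₀ : List α} (hv₀ : WIndep I v₀ u)
    (h : IndepShuffle I u z v) : IndepShuffle I u (v₀ ++ z) (v₀ ++ v) := by
  induction v₀ with
  | nil => exact h
  | cons b v₀ ih =>
    exact .consRight b (hv₀ b List.mem_cons_self)
      (ih fun c hc => hv₀ c (List.mem_cons_of_mem b hc))

theorem trEq [Std.Symm I] {u z v : List α} (h : IndepShuffle I u z v) :
    TrEq I (u ++ v) z := by
  induction h with
  | nil => exact .refl _
  | consLeft a _ ih => exact ih.append_left_s6 [a]
  | consRight b hb _ ih => exact (TrEq.append_cons_of_forall hb).trans (ih.append_left_s6 [b])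

theorem insert {a : α} (x : List α) {u y v : List α} (h : IndepShuffle I u (x ++ y) v)
    (hx : ∀ c ∈ x, I c a) :
    ∃ p q, u = p ++ q ∧ (∀ c ∈ p, I c a) ∧
      IndepShuffle I (p ++ a :: q) (x ++ a :: y) v := by
  induction x generalizing u v with
  | nil => exact ⟨[], u, rfl, by simp, .consLeft a h⟩
  | cons c x ih =>
    have hx' : ∀ d ∈ x, I d a := fun d hd => hx d (List.mem_cons_of_mem c hd)
    cases h with
    | consLeft _ h =>
      obtain ⟨p, q, rfl, hp, h'⟩ := ih h hx'
      refine ⟨c :: p, q, rfl, ?_, .consLeft c h'⟩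
      rintro d (_ | ⟨_, hd⟩)
      exacts [hx c List.mem_cons_self, hp d hd]
    | consRight _ hc h =>
      obtain ⟨p, q, rfl, hp, h'⟩ := ih h hx'
      refine ⟨p, q, rfl, hp, .consRight c ?_ h'⟩
      intro d hd
      simp only [List.mem_append, List.mem_cons] at hd
      rcases hd with hd | rfl | hd
      · exact hc d (List.mem_append_left q hd)
      · exact hx c List.mem_cons_self
      · exact hc d (List.mem_append_right p hd)

end IndepShuffle

theorem TrEq.exists_indepShuffle [Std.Symm I] (u : List α) {v z : List α}
    (h : TrEq I (u ++ v) z) :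
    ∃ u' v', TrEq I u u' ∧ IndepShuffle I u' z v' ∧ TrEq I v' v := by
  induction u generalizing v z with
  | nil => exact ⟨[], z, .refl _, .nil_left z, h.symm⟩
  | cons a u ih =>
    obtain ⟨x, y, rfl, hx, h₁⟩ := h.exists_of_cons
    obtain ⟨u', v', hu, hsh, hv⟩ := ih h₁
    obtain ⟨p, q, rfl, hp, hsh'⟩ := hsh.insert x hx
    have hpull : TrEq I (p ++ a :: q) (a :: (p ++ q)) :=
      TrEq.append_cons_of_forall fun c hc => symm_of I (hp c hc)
    exact ⟨p ++ a :: q, v', (hu.append_left_s6 [a]).trans hpull.symm, hsh', hv⟩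

theorem indepShuffle_of_blocks (n : ℕ) (us vs : ℕ → List α)
    (hind : ∀ i j, 1 ≤ i → i ≤ n → j < i → WIndep I (vs j) (us i)) :
    IndepShuffle I ((List.range n).map fun i => us (i + 1)).flatten
      (vs 0 ++ ((List.range n).map fun i => us (i + 1) ++ vs (i + 1)).flatten)
      ((List.range (n + 1)).map vs).flatten := by
  induction n generalizing us vs with
  | zero => simpa using IndepShuffle.nil_left (vs 0)
  | succ n ih =>
    have htail := ih (fun i => us (i + 1)) (fun j => vs (j + 1))
      fun i j hi hin hji => hind (i + 1) (j + 1) (by omega) (by omega) (by omega)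
    have hv₀ : WIndep I (vs 0) (us 1 ++ ((List.range n).map fun i => us (i + 2)).flatten) := by
      intro c hc d hd
      simp only [List.mem_append, List.mem_flatten, List.mem_map, List.mem_range] at hd
      rcases hd with hd | ⟨_, ⟨i, hi, rfl⟩, hd⟩
      · exact hind 1 0 le_rfl (by omega) one_pos c hc d hd
      · exact hind (i + 2) 0 (by omega) (by omega) (by omega) c hc d hd
    simpa [List.flatten_map_range_succ, List.append_assoc] using
      (htail.append_left_s6 (us 1)).append_right_s6 hv₀

theorem Scat.indepShuffle {u z v : List α} (h : Scat I u z v) : IndepShuffle I u z v := by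
  obtain ⟨n, us, vs, -, -, rfl, rfl, rfl, hind⟩ := h
  exact indepShuffle_of_blocks n us vs hind

variable (I) in
structure ScatWitness (n : ℕ) (us vs : ℕ → List α) (u z v : List α) : Prop where
  us_ne_nil : ∀ i, 1 ≤ i → i ≤ n → us i ≠ []
  vs_ne_nil : ∀ j, 1 ≤ j → j ≤ n - 1 → vs j ≠ []
  left_eq : u = ((List.range n).map fun i => us (i + 1)).flatten
  right_eq : v = ((List.range (n + 1)).map vs).flatten
  eq : z = vs 0 ++ ((List.range n).map fun i => us (i + 1) ++ vs (i + 1)).flatten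
  indep : ∀ i j, 1 ≤ i → i ≤ n → j < i → WIndep I (vs j) (us i)

namespace ScatWitness

variable {n : ℕ} {us vs : ℕ → List α} {u z v : List α}

theorem scatN (h : ScatWitness I n us vs u z v) : ScatN I n u z v :=
  ⟨us, vs, h.us_ne_nil, h.vs_ne_nil, h.left_eq, h.right_eq, h.eq, h.indep⟩

theorem nil : ScatWitness I 0 (fun _ => []) (fun _ => []) [] [] [] :=
  ⟨by omega, by omega, rfl, rfl, rfl, by omega⟩

theorem mem_left (h : ScatWitness I n us vs u z v) {i : ℕ} (hi₁ : 1 ≤ i) (hin : i ≤ n)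
    {c : α} (hc : c ∈ us i) : c ∈ u := by
  rw [h.left_eq, List.mem_flatten]
  refine ⟨us i, List.mem_map.mpr ⟨i - 1, List.mem_range.mpr (by omega), ?_⟩, hc⟩
  congr 1
  omega

theorem consRight {b : α} (hb : ∀ c ∈ u, I b c) (h : ScatWitness I n us vs u z v) :
    ScatWitness I n us (fun | 0 => b :: vs 0 | j + 1 => vs (j + 1)) u (b :: z) (b :: v) := by
  refine ⟨h.us_ne_nil, fun | j + 1, _, hj => h.vs_ne_nil (j + 1) (by omega) hj, h.left_eq,
    ?_, by simp [h.eq], ?_⟩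
  · simp [List.flatten_map_range_succ, h.right_eq]
  · rintro i (_ | j) hi₁ hin hji c hc d hd
    · rcases List.mem_cons.mp hc with rfl | hc
      · exact hb d (h.mem_left hi₁ hin hd)
      · exact h.indep i 0 hi₁ hin hji c hc d hd
    · exact h.indep i (j + 1) hi₁ hin hji c hc d hd

theorem consLeft_of_head_nil {a : α} (h : ScatWitness I (n + 1) us vs u z v) (h₀ : vs 0 = []) :
    ScatWitness I (n + 1) (fun | 0 => us 0 | 1 => a :: us 1 | i + 2 => us (i + 2)) vs
      (a :: u) (a :: z) v := by
  refine ⟨?_, h.vs_ne_nil, ?_, h.right_eq, ?_, ?_⟩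
  · rintro (_ | _ | i) hi₁ hin
    · omega
    · exact List.cons_ne_nil _ _
    · exact h.us_ne_nil (i + 2) hi₁ hin
  · simp [List.flatten_map_range_succ, h.left_eq]
  · simp [List.flatten_map_range_succ, h.eq, h₀]
  · rintro (_ | _ | i) j hi₁ hin hji
    · omega
    · simp [show j = 0 by omega, h₀, WIndep]
    · exact h.indep (i + 2) j hi₁ hin hji

/-- Prepending the block `[a]` shifts all indices; `h₀` keeps the old `vs 0`, now an inner
block of `v`, nonempty. -/
theorem consLeft_newBlock {a : α} (h : ScatWitness I n us vs u z v)
    (h₀ : n = 0 ∨ vs 0 ≠ []) :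
    ScatWitness I (n + 1) (fun | 0 => [] | 1 => [a] | i + 2 => us (i + 1))
      (fun | 0 => [] | j + 1 => vs j) (a :: u) (a :: z) v := by
  refine ⟨?_, ?_, ?_, ?_, ?_, ?_⟩
  · rintro (_ | _ | i) hi₁ hin
    · omega
    · exact List.cons_ne_nil _ _
    · exact h.us_ne_nil (i + 1) (by omega) (by omega)
  · rintro (_ | _ | j) hj₁ hjn
    · omega
    · exact h₀.resolve_left (by omega)
    · exact h.vs_ne_nil (j + 1) (by omega) (by omega)
  · simp [List.flatten_map_range_succ, h.left_eq]
  · simp [List.flatten_map_range_succ, h.right_eq]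
  · simp [List.flatten_map_range_succ, h.eq]
  · rintro (_ | _ | i) (_ | j) hi₁ hin hji
    all_goals first
      | omega
      | exact h.indep (i + 1) j (by omega) (by omega) (by omega)
      | simp [WIndep]

end ScatWitness

theorem IndepShuffle.exists_scatWitness {u z v : List α} (h : IndepShuffle I u z v) :
    ∃ n us vs, ScatWitness I n us vs u z v := by
  induction h with
  | nil => exact ⟨0, _, _, .nil⟩
  | consLeft a _ ih =>
    obtain ⟨n, us, vs, hw⟩ := ih
    by_cases hmerge : n ≠ 0 ∧ vs 0 = []
    · obtain ⟨m, rfl⟩ := Nat.exists_eq_succ_of_ne_zero hmerge.1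
      exact ⟨m + 1, _, _, hw.consLeft_of_head_nil hmerge.2⟩
    · exact ⟨n + 1, _, _, hw.consLeft_newBlock (by tauto)⟩
  | consRight b hb _ ih =>
    obtain ⟨n, us, vs, hw⟩ := ih
    exact ⟨n, _, _, hw.consRight hb⟩

theorem IndepShuffle.scat {u z v : List α} (h : IndepShuffle I u z v) : Scat I u z v :=
  let ⟨n, _, _, hw⟩ := h.exists_scatWitness
  ⟨n, hw.scatN⟩

theorem append_mem_trClosure_iff [Std.Symm I] (L : Set (List α)) (u v : List α) :
    u ++ v ∈ TrClosure I L ↔ v ∈ TrClosure I (RDeriv I u L) := by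
  constructor
  · rintro ⟨z, hz, h⟩
    obtain ⟨u', v', hu, hsh, hv⟩ := h.exists_indepShuffle u
    exact ⟨v', ⟨z, hz, u', hu, hsh.scat⟩, hv.symm⟩
  · rintro ⟨v', ⟨z, hz, u', hu, hscat⟩, hv⟩
    exact ⟨z, hz, (hu.append_s6 hv).trans hscat.indepShuffle.trEq⟩

theorem nil_mem_trClosure_iff (L : Set (List α)) : [] ∈ TrClosure I L ↔ [] ∈ L :=
  ⟨fun ⟨_, hz, h⟩ => h.eq_nil_of_nil ▸ hz, fun h => ⟨[], h, .refl _⟩⟩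

end

theorem stmt6_general {α : Type u} (I : α → α → Prop)
    (hsym : Symmetric I) (L : Set (List α)) (u : List α) :
    {v | u ++ v ∈ TrClosure I L} = TrClosure I (RDeriv I u L) ∧
    (∀ v, u ++ v ∈ TrClosure I L ↔ v ∈ TrClosure I (RDeriv I u L)) ∧
    (u ∈ TrClosure I L ↔ [] ∈ RDeriv I u L) := by
  have : Std.Symm I := ⟨fun _ _ h => hsym h⟩
  have key := append_mem_trClosure_iff (I := I) L u
  refine ⟨Set.ext key, key, ?_⟩
  simpa [nil_mem_trClosure_iff] using key []

/-- D_u [L] = [D^I_u L]; u++v ∈ [L] iff v ∈ [D^I_u L]; u ∈ [L] iff ε ∈ D^I_u L. -/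
theorem stmt6 {α : Type u} [Fintype α] (I : α → α → Prop)
    (hirr : Irreflexive I) (hsym : Symmetric I) (L : Set (List α)) (u : List α) :
    {v | u ++ v ∈ TrClosure I L} = TrClosure I (RDeriv I u L) ∧
    (∀ v, u ++ v ∈ TrClosure I L ↔ v ∈ TrClosure I (RDeriv I u L)) ∧
    (u ∈ TrClosure I L ↔ [] ∈ RDeriv I u L) :=
  stmt6_general I hsym L u
end
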